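/- arXiv:1206.0066 — 6 statements merged into one kernel-verified Lean document; each statement's English description precedes it below -/
import Mathlib

section
/- Define F₁(p) = -p₀₁² - 4p₀₁p₀₂ - 3p₀₂² + (p₁₁+p₁₂)² and F₂(p) = 3p₀₁² + 4p₀₁p₀₂ + p₀₂² - (p₁₁+p₁₂)², where p_{ak} stands for ∂ₐu_k. Then the reduced nonlinearity F^red(ω,Y) = (Y₁+Y₂)·((ω₁²-1)Y₁+(ω₁²-3)Y₂, (3-ω₁²)Y₁+(1-ω₁²)Y₂)ᵀ, and with A(ω) = (1/2)[[3-ω₁², 1-ω₁²],[1-ω₁², 3-ω₁²]] one has Yᵀ A(ω) F^red(ω,Y) = 0 for all ω ∈ S² and Y ∈ ℝ². -/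
open Matrix

/-- For F₁(p) = -p₀₁² - 4p₀₁p₀₂ - 3p₀₂² + (p₁₁+p₁₂)² and
F₂(p) = 3p₀₁² + 4p₀₁p₀₂ + p₀₂² - (p₁₁+p₁₂)², the reduced nonlinearity is
F^red(ω,Y) = (Y₁+Y₂)·((ω₁²-1)Y₁+(ω₁²-3)Y₂, (3-ω₁²)Y₁+(1-ω₁²)Y₂)ᵀ and with
A(ω) = (1/2)[[3-ω₁²,1-ω₁²],[1-ω₁²,3-ω₁²]] one has Yᵀ A(ω) F^red(ω,Y) = 0. -/
theorem stmt3 (F₁ F₂ : (Fin 4 → Fin 2 → ℝ) → ℝ)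
    (hF₁ : ∀ p, F₁ p =
      -(p 0 0) ^ 2 - 4 * (p 0 0) * (p 0 1) - 3 * (p 0 1) ^ 2 + (p 1 0 + p 1 1) ^ 2)
    (hF₂ : ∀ p, F₂ p =
      3 * (p 0 0) ^ 2 + 4 * (p 0 0) * (p 0 1) + (p 0 1) ^ 2 - (p 1 0 + p 1 1) ^ 2)
    (ω : Fin 4 → ℝ) (hω0 : ω 0 = -1)
    (hsphere : ω 1 ^ 2 + ω 2 ^ 2 + ω 3 ^ 2 = 1)
    (Y : Fin 2 → ℝ) :
    F₁ (fun a k => ω a * Y k)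
      = (Y 0 + Y 1) * ((ω 1 ^ 2 - 1) * Y 0 + (ω 1 ^ 2 - 3) * Y 1) ∧
    F₂ (fun a k => ω a * Y k)
      = (Y 0 + Y 1) * ((3 - ω 1 ^ 2) * Y 0 + (1 - ω 1 ^ 2) * Y 1) ∧
    Y ⬝ᵥ ((!![(3 - ω 1 ^ 2) / 2, (1 - ω 1 ^ 2) / 2;
              (1 - ω 1 ^ 2) / 2, (3 - ω 1 ^ 2) / 2]).mulVec
        ![F₁ (fun a k => ω a * Y k), F₂ (fun a k => ω a * Y k)]) = 0 := by
  rw [hF₁, hF₂, hω0]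
  refine ⟨by ring, by ring, ?_⟩
  simp [dotProduct, mulVec, Matrix.mul_apply, Fin.sum_univ_succ]
  ring
end

section
/- Let t₀ ≥ 1, Φ : ℂ → ℝ satisfy |Φ(z)-Φ(w)| ≤ C₀|z-w| for all z,w ∈ ℂ, and J : [t₀,∞) → ℂ satisfy |J(t)| ≤ E₀ t^{-1-λ} with C₀, E₀, λ > 0. Let z : [t₀,∞) → ℂ be a C¹ solution of i z'(t) = Φ(z(t)) z(t)/t + J(t). If C₀(E₀ t₀^{-λ} + |z(t₀)| λ) < λ², then there exists a C¹ function p : [log t₀, ∞) → ℂ satisfying i p'(s) = Φ(p(s)) p(s) and |z(t) - p(log t)| ≤ E₀ λ / ({λ² - C₀(E₀ t₀^{-λ} + |z(t₀)|λ)} t^λ) for all t ≥ t₀. -/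
/-!
In the logarithmic time `s = log t` the equation reads `i w' = Φ(w) w + F` with
`‖F s‖ ≤ E₀ e^{-λs}`. Since `Φ` is real, the gauge `q = e^{iθ} w`, `θ' = Φ(w)`, removes the
nonlinearity: `q' = -i e^{iθ} F`, so `q` converges to some `L` at rate `E₀ e^{-λs} / λ`, and
`‖L‖ ≤ ‖z t₀‖ + E₀ t₀^{-λ} / λ`. The profile is `p = e^{-iψ} L` with `ψ' = Φ(e^{-iψ} L)`.
Writing `ψ = θ + u`, the correction `u` solves an equation which is `C₀‖L‖`-Lipschitz in `u` and
has forcing `O(e^{-λs})`. The smallness hypothesis gives `C₀‖L‖ < λ`, so `u ↦ -∫_s^∞ (…)` is a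
contraction for the weighted norm `sup_s e^{λs} |u s|`, and its fixed point decays like `e^{-λs}`.
-/

open Filter MeasureTheory Set Topology Real
open Complex (I)
open scoped NNReal BoundedContinuousFunction Complex

section TailIntegral

variable {E : Type*} [NormedAddCommGroup E] {f : ℝ → E} {K l : ℝ}

theorem integrableOn_Ioi_of_norm_le_exp (hl : 0 < l) (hf : Continuous f)
    (hbd : ∀ σ, ‖f σ‖ ≤ K * exp (-l * σ)) (s : ℝ) : IntegrableOn f (Ioi s) :=
  ((exp_neg_integrableOn_Ioi s hl).const_mul K).mono' hf.aestronglyMeasurable.restrict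
    (.of_forall hbd)

theorem norm_integral_Ioi_le_of_norm_le_exp [NormedSpace ℝ E] (hl : 0 < l)
    (hbd : ∀ σ, ‖f σ‖ ≤ K * exp (-l * σ)) (s : ℝ) : ‖∫ σ in Ioi s, f σ‖ ≤ K / l * exp (-l * s) := by
  calc ‖∫ σ in Ioi s, f σ‖ ≤ ∫ σ in Ioi s, K * exp (-l * σ) :=
        norm_integral_le_of_norm_le ((exp_neg_integrableOn_Ioi s hl).const_mul K)
          (.of_forall hbd)
    _ = K / l * exp (-l * s) := by
        rw [integral_const_mul, integral_exp_mul_Ioi (by linarith)]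
        field_simp

theorem norm_exp_smul_integral_Ioi_le [NormedSpace ℝ E] (hl : 0 < l)
    (hbd : ∀ σ, ‖f σ‖ ≤ K * exp (-l * σ)) (s : ℝ) : ‖exp (l * s) • ∫ σ in Ioi s, f σ‖ ≤ K / l := by
  rw [norm_smul, norm_of_nonneg (exp_pos _).le]
  calc exp (l * s) * ‖∫ σ in Ioi s, f σ‖ ≤ exp (l * s) * (K / l * exp (-l * s)) :=
        mul_le_mul_of_nonneg_left (norm_integral_Ioi_le_of_norm_le_exp hl hbd s) (exp_pos _).le
    _ = K / l := by rw [mul_left_comm, ← exp_add]; simp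

theorem hasDerivAt_integral_Ioi [NormedSpace ℝ E] [CompleteSpace E] (hf : Continuous f)
    (hint : ∀ s, IntegrableOn f (Ioi s)) (s : ℝ) :
    HasDerivAt (fun x => ∫ σ in Ioi x, f σ) (-f s) s := by
  have hsplit : (fun x => ∫ σ in Ioi x, f σ) = fun x => (∫ σ in x..s, f σ) + ∫ σ in Ioi s, f σ :=
    funext fun x => (intervalIntegral.integral_interval_add_Ioi (hint x) (hint s)).symm
  rw [hsplit]
  exact (intervalIntegral.integral_hasDerivAt_left (hf.intervalIntegrable _ _)
    (hf.stronglyMeasurableAtFilter _ _) hf.continuousAt).add_const _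

end TailIntegral

section DecayingSolution

variable {E : Type*} [NormedAddCommGroup E] [NormedSpace ℝ E]
  {h : ℝ → E → E} {l c : ℝ} {μ : ℝ≥0}

theorem norm_apply_exp_smul_le (hlip : ∀ σ, LipschitzWith μ (h σ))
    (hbd : ∀ σ, ‖h σ 0‖ ≤ c * exp (-l * σ)) (v : ℝ →ᵇ E) (σ : ℝ) :
    ‖h σ (exp (-l * σ) • v σ)‖ ≤ (c + μ * ‖v‖) * exp (-l * σ) := by
  have hv : ‖exp (-l * σ) • v σ‖ ≤ exp (-l * σ) * ‖v‖ := by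
    rw [norm_smul, norm_of_nonneg (exp_pos _).le]
    exact mul_le_mul_of_nonneg_left (v.norm_coe_le_norm σ) (exp_pos _).le
  calc ‖h σ (exp (-l * σ) • v σ)‖
      ≤ ‖h σ (exp (-l * σ) • v σ) - h σ 0‖ + ‖h σ 0‖ := norm_le_norm_sub_add _ _
    _ ≤ μ * ‖exp (-l * σ) • v σ‖ + c * exp (-l * σ) := by
        gcongr
        · simpa [dist_eq_norm] using (hlip σ).dist_le_mul (exp (-l * σ) • v σ) 0
        · exact hbd σ
    _ ≤ (c + μ * ‖v‖) * exp (-l * σ) := by nlinarith [μ.2]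

theorem norm_apply_exp_smul_sub_le (hlip : ∀ σ, LipschitzWith μ (h σ)) (v v' : ℝ →ᵇ E)
    (σ : ℝ) : ‖h σ (exp (-l * σ) • v σ) - h σ (exp (-l * σ) • v' σ)‖
      ≤ μ * dist v v' * exp (-l * σ) := by
  calc ‖h σ (exp (-l * σ) • v σ) - h σ (exp (-l * σ) • v' σ)‖
      ≤ μ * ‖exp (-l * σ) • v σ - exp (-l * σ) • v' σ‖ := by
        simpa [dist_eq_norm] using (hlip σ).dist_le_mul _ _
    _ = μ * (exp (-l * σ) * dist (v σ) (v' σ)) := by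
        rw [← smul_sub, norm_smul, norm_of_nonneg (exp_pos _).le, dist_eq_norm]
    _ ≤ μ * dist v v' * exp (-l * σ) := by
        rw [mul_assoc, mul_comm (dist v v')]
        gcongr
        exact v.dist_coe_le_dist σ

variable [CompleteSpace E]

theorem exists_hasDerivAt_norm_le_exp (hcont : Continuous (Function.uncurry h))
    (hlip : ∀ σ, LipschitzWith μ (h σ)) (hμl : μ < l) (hbd : ∀ σ, ‖h σ 0‖ ≤ c * exp (-l * σ)) :
    ∃ u : ℝ → E, (∀ s, HasDerivAt u (h s (u s)) s) ∧ ∀ s, ‖u s‖ ≤ c / (l - μ) * exp (-l * s) := by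
  have hl : 0 < l := μ.2.trans_lt hμl
  have hc : 0 ≤ c := nonneg_of_mul_nonneg_left ((norm_nonneg _).trans (hbd 0)) (exp_pos _)
  set F : (ℝ →ᵇ E) → ℝ → E := fun v σ => h σ (exp (-l * σ) • v σ)
  have hF_cont (v : ℝ →ᵇ E) : Continuous (F v) :=
    hcont.comp (continuous_id.prodMk ((continuous_const.mul continuous_id).rexp.smul v.continuous))
  have hF_int (v : ℝ →ᵇ E) : ∀ s, IntegrableOn (F v) (Ioi s) :=
    integrableOn_Ioi_of_norm_le_exp hl (hF_cont v) (norm_apply_exp_smul_le hlip hbd v)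
  have hG_cont (v : ℝ →ᵇ E) : Continuous fun s => -(exp (l * s) • ∫ σ in Ioi s, F v σ) :=
    ((continuous_const.mul continuous_id).rexp.smul (continuous_iff_continuousAt.2 fun s =>
      (hasDerivAt_integral_Ioi (hF_cont v) (hF_int v) s).continuousAt)).neg
  -- A fixed point `v` of `T` gives the solution `u s = exp (-l * s) • v s`.
  let T : (ℝ →ᵇ E) → (ℝ →ᵇ E) := fun v =>
    .ofNormedAddCommGroup _ (hG_cont v) ((c + μ * ‖v‖) / l) fun s => by
      rw [norm_neg]; exact norm_exp_smul_integral_Ioi_le hl (norm_apply_exp_smul_le hlip hbd v) s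
  have hT : ContractingWith (μ / l.toNNReal) T := by
    refine ⟨?_, LipschitzWith.of_dist_le_mul fun v v' => ?_⟩
    · rw [div_lt_one (by simpa using hl)]
      exact (Real.lt_toNNReal_iff_coe_lt).2 hμl
    rw [NNReal.coe_div, Real.coe_toNNReal _ hl.le, div_mul_eq_mul_div]
    refine (BoundedContinuousFunction.dist_le (by positivity)).2 fun s => ?_
    have hdiff : T v s - T v' s = -(exp (l * s) • ∫ σ in Ioi s, (F v σ - F v' σ)) := by
      rw [integral_sub (hF_int v s) (hF_int v' s), smul_sub]
      simp only [T, BoundedContinuousFunction.coe_ofNormedAddCommGroup]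
      abel
    rw [dist_eq_norm, hdiff, norm_neg]
    exact norm_exp_smul_integral_Ioi_le hl (norm_apply_exp_smul_sub_le hlip v v') s
  set v := ContractingWith.fixedPoint T hT
  have hv : T v = v := ContractingWith.fixedPoint_isFixedPt hT
  have hv_norm : ‖v‖ ≤ c / (l - μ) := by
    have h1 : ‖T v‖ ≤ (c + μ * ‖v‖) / l :=
      BoundedContinuousFunction.norm_ofNormedAddCommGroup_le _ (by positivity) _
    rw [hv, le_div_iff₀ hl] at h1
    rw [le_div_iff₀ (by linarith)]
    linarith
  have hu (s : ℝ) : -∫ σ in Ioi s, F v σ = exp (-l * s) • v s := by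
    conv_rhs => rw [← hv]
    simp [T, smul_smul, ← exp_add]
  refine ⟨fun s => -∫ σ in Ioi s, F v σ, fun s => ?_, fun s => ?_⟩
  · show HasDerivAt _ (h s (-∫ σ in Ioi s, F v σ)) s
    rw [hu]
    exact (hasDerivAt_integral_Ioi (hF_cont v) (hF_int v) s).neg.congr_deriv (neg_neg _)
  · show ‖-∫ σ in Ioi s, F v σ‖ ≤ _
    rw [hu, norm_smul, norm_of_nonneg (exp_pos _).le, mul_comm]
    exact mul_le_mul_of_nonneg_right ((v.norm_coe_le_norm s).trans hv_norm) (exp_pos _).le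

end DecayingSolution

section DecayingDerivative

variable {E : Type*} [NormedAddCommGroup E] [NormedSpace ℝ E] {f f' : ℝ → E} {a K l : ℝ}

theorem norm_sub_le_of_norm_deriv_le_exp (hl : 0 < l)
    (hf : ∀ x ≥ a, HasDerivWithinAt f (f' x) (Ici a) x)
    (hbd : ∀ x ≥ a, ‖f' x‖ ≤ K * exp (-l * x)) {x y : ℝ} (hx : a ≤ x) (hxy : x ≤ y) :
    ‖f y - f x‖ ≤ K / l * exp (-l * x) := by
  have hB (r : ℝ) : HasDerivAt (fun r => K / l * (exp (-l * x) - exp (-l * r)))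
      (K * exp (-l * r)) r := by
    have := (((hasDerivAt_id r).const_mul (-l)).exp.const_sub (exp (-l * x))).const_mul (K / l)
    refine this.congr_deriv ?_
    simp only [id, mul_one]
    field_simp
  have hK : 0 ≤ K := nonneg_of_mul_nonneg_left ((norm_nonneg _).trans (hbd a le_rfl)) (exp_pos _)
  have key := image_norm_le_of_norm_deriv_right_le_deriv_boundary (f := fun r => f r - f x)
    (fun r hr => ((hf r (hx.trans hr.1)).continuousWithinAt.mono
      (Icc_subset_Ici_self.trans (Ici_subset_Ici.2 hx))).sub continuousWithinAt_const)
    (fun r hr => ((hf r (hx.trans hr.1)).mono (Ici_subset_Ici.2 (hx.trans hr.1))).sub_const _)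
    (by simp) hB (fun r hr => hbd r (hx.trans hr.1)) (right_mem_Icc.2 hxy)
  refine key.trans ?_
  have := exp_pos (-l * y)
  have : 0 ≤ K / l := by positivity
  nlinarith

variable [CompleteSpace E]

theorem exists_norm_sub_le_of_norm_deriv_le_exp (hl : 0 < l)
    (hf : ∀ x ≥ a, HasDerivWithinAt f (f' x) (Ici a) x)
    (hbd : ∀ x ≥ a, ‖f' x‖ ≤ K * exp (-l * x)) :
    ∃ L, ∀ x ≥ a, ‖f x - L‖ ≤ K / l * exp (-l * x) := by
  have hdecay : Tendsto (fun x => K / l * exp (-l * x)) atTop (𝓝 0) := by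
    simpa using (tendsto_exp_atBot.comp
      (tendsto_id.const_mul_atTop_of_neg (neg_neg_of_pos hl))).const_mul (K / l)
  have hcauchy : CauchySeq fun x => f (max x a) := by
    refine cauchySeq_of_le_tendsto_0' (fun x => K / l * exp (-l * max x a)) (fun x y hxy => ?_) ?_
    · rw [dist_comm, dist_eq_norm]
      exact norm_sub_le_of_norm_deriv_le_exp hl hf hbd (le_max_right _ _) (max_le_max_right _ hxy)
    · refine hdecay.congr' ?_
      filter_upwards [eventually_ge_atTop a] with x hx
      rw [max_eq_left hx]
  obtain ⟨L, hL⟩ := cauchySeq_tendsto_of_complete hcauchy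
  refine ⟨L, fun x hx => le_of_tendsto ((tendsto_const_nhds.sub hL).norm) ?_⟩
  filter_upwards [eventually_ge_atTop x] with y hy
  rw [max_eq_left (hx.trans hy), norm_sub_rev]
  exact norm_sub_le_of_norm_deriv_le_exp hl hf hbd hx hy

end DecayingDerivative

theorem norm_exp_mul_I_mul_sub_le (a b : ℝ) (L : ℂ) :
    ‖cexp (a * I) * L - cexp (b * I) * L‖ ≤ |a - b| * ‖L‖ := by
  rw [← sub_mul, norm_mul]
  gcongr
  simpa [circleMap, dist_eq_norm] using (lipschitzWith_circleMap 0 1).dist_le_mul a b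

theorem hasDerivAt_exp_neg_mul_I_mul {ψ : ℝ → ℝ} {r s : ℝ} (hψ : HasDerivAt ψ r s) (L : ℂ) :
    HasDerivAt (fun s => cexp (↑(-ψ s) * I) * L) (-I * (r * (cexp (↑(-ψ s) * I) * L))) s := by
  refine ((hψ.neg.ofReal_comp.mul_const I).cexp.mul_const L).congr_deriv ?_
  simp only [Pi.neg_apply, Complex.ofReal_neg]
  ring

theorem exists_norm_sub_exp_mul_I_mul_le {Φ : ℂ → ℝ} {w F : ℝ → ℂ} {θ : ℝ → ℝ} {s₀ K l : ℝ}
    (hl : 0 < l) (hw : ∀ s ≥ s₀, HasDerivWithinAt w (-I * (Φ (w s) * w s + F s)) (Ici s₀) s)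
    (hθ : ∀ s ≥ s₀, HasDerivAt θ (Φ (w s)) s) (hF : ∀ s ≥ s₀, ‖F s‖ ≤ K * exp (-l * s)) :
    ∃ L : ℂ, ∀ s ≥ s₀, ‖w s - cexp (↑(-θ s) * I) * L‖ ≤ K / l * exp (-l * s) := by
  have hq (s : ℝ) (hs : s ≥ s₀) : HasDerivWithinAt (fun s => cexp (θ s * I) * w s)
      (cexp (θ s * I) * (-I * F s)) (Ici s₀) s := by
    refine (((hθ s hs).ofReal_comp.mul_const I).cexp.hasDerivWithinAt.mul (hw s hs)).congr_deriv ?_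
    ring
  have hq_norm (s : ℝ) (hs : s ≥ s₀) : ‖cexp (θ s * I) * (-I * F s)‖ ≤ K * exp (-l * s) := by
    simpa [Complex.norm_exp_ofReal_mul_I] using hF s hs
  obtain ⟨L, hL⟩ := exists_norm_sub_le_of_norm_deriv_le_exp hl hq hq_norm
  refine ⟨L, fun s hs => ?_⟩
  have hw_eq : w s - cexp (↑(-θ s) * I) * L = cexp (↑(-θ s) * I) * (cexp (θ s * I) * w s - L) := by
    rw [mul_sub, ← mul_assoc, ← Complex.exp_add]
    simp
  rw [hw_eq, norm_mul, Complex.norm_exp_ofReal_mul_I, one_mul]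
  exact hL s hs

theorem exists_phase_sub_le {Φ : ℂ → ℝ} {C : ℝ≥0} (hΦ : LipschitzWith C Φ) {θ φ : ℝ → ℝ}
    (hφ : Continuous φ) (hθ : ∀ s, HasDerivAt θ (φ s) s) {L : ℂ} {c l s₀ : ℝ}
    (hl : C * ‖L‖ < l) (hc : ∀ s ≥ s₀, |φ s - Φ (cexp (↑(-θ s) * I) * L)| ≤ c * exp (-l * s)) :
    ∃ ψ : ℝ → ℝ, (∀ s ≥ s₀, HasDerivAt ψ (Φ (cexp (↑(-ψ s) * I) * L)) s) ∧
      ∀ s ≥ s₀, |ψ s - θ s| ≤ c / (l - C * ‖L‖) * exp (-l * s) := by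
  -- `ψ = θ + u`; the equation for `u` is frozen at time `s₀` for `σ < s₀`, so that its forcing
  -- decays on all of `ℝ`
  set h : ℝ → ℝ → ℝ := fun σ x =>
    Φ (cexp (↑(-(θ (max σ s₀) + x)) * I) * L) - φ (max σ s₀) with hh
  have hθc : Continuous θ := continuous_iff_continuousAt.2 fun s => (hθ s).continuousAt
  have hcont : Continuous (Function.uncurry h) := by
    have := hΦ.continuous
    fun_prop
  have hlip (σ : ℝ) : LipschitzWith (C * ‖L‖₊) (h σ) := by
    refine LipschitzWith.of_dist_le_mul fun x y => ?_
    rw [Real.dist_eq, sub_sub_sub_cancel_right, NNReal.coe_mul, coe_nnnorm, mul_assoc]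
    refine (hΦ.dist_le_mul _ _).trans (mul_le_mul_of_nonneg_left ?_ C.2)
    rw [dist_eq_norm]
    refine (norm_exp_mul_I_mul_sub_le _ _ L).trans_eq ?_
    rw [Real.dist_eq, mul_comm, ← abs_neg]
    ring_nf
  have hc₀ : 0 ≤ c := nonneg_of_mul_nonneg_left ((abs_nonneg _).trans (hc s₀ le_rfl)) (exp_pos _)
  have hbd (σ : ℝ) : ‖h σ 0‖ ≤ c * exp (-l * σ) := by
    rw [Real.norm_eq_abs, hh, abs_sub_comm, add_zero]
    refine (hc _ (le_max_right _ _)).trans (mul_le_mul_of_nonneg_left ?_ hc₀)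
    have hl₀ : 0 ≤ l := (mul_nonneg C.2 (norm_nonneg L)).trans hl.le
    exact exp_le_exp.2 (mul_le_mul_of_nonpos_left (le_max_left _ _) (by linarith))
  obtain ⟨u, hu, hu_le⟩ := exists_hasDerivAt_norm_le_exp hcont hlip (by simpa using hl) hbd
  refine ⟨θ + u, fun s hs => ?_, fun s _ => ?_⟩
  · refine ((hθ s).add (hu s)).congr_deriv ?_
    simp only [hh, max_eq_left hs, Pi.add_apply]
    ring
  · simpa using hu_le s

theorem exists_profile_norm_sub_le {Φ : ℂ → ℝ} {C : ℝ≥0} (hΦ : LipschitzWith C Φ) {w : ℝ → ℂ}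
    (hw : Continuous w) {θ : ℝ → ℝ} (hθ : ∀ s, HasDerivAt θ (Φ (w s)) s) {L : ℂ} {K l s₀ : ℝ}
    (hl : C * ‖L‖ < l) (hwL : ∀ s ≥ s₀, ‖w s - cexp (↑(-θ s) * I) * L‖ ≤ K * exp (-l * s)) :
    ∃ p : ℝ → ℂ, (∀ s ≥ s₀, HasDerivAt p (-I * (Φ (p s) * p s)) s) ∧
      ∀ s ≥ s₀, ‖w s - p s‖ ≤ l * K / (l - C * ‖L‖) * exp (-l * s) := by
  have hc (s : ℝ) (hs : s ≥ s₀) :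
      |Φ (w s) - Φ (cexp (↑(-θ s) * I) * L)| ≤ C * K * exp (-l * s) := by
    rw [← Real.dist_eq, mul_assoc]
    exact (hΦ.dist_le_mul _ _).trans
      (mul_le_mul_of_nonneg_left ((dist_eq_norm _ _).trans_le (hwL s hs)) C.2)
  obtain ⟨ψ, hψ, hψθ⟩ := exists_phase_sub_le hΦ (hΦ.continuous.comp hw) hθ hl hc
  refine ⟨fun s => cexp (↑(-ψ s) * I) * L, fun s hs => hasDerivAt_exp_neg_mul_I_mul (hψ s hs) L,
    fun s hs => ?_⟩
  have hlμ : 0 < l - C * ‖L‖ := sub_pos.2 hl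
  calc ‖w s - cexp (↑(-ψ s) * I) * L‖
      ≤ ‖w s - cexp (↑(-θ s) * I) * L‖ + ‖cexp (↑(-θ s) * I) * L - cexp (↑(-ψ s) * I) * L‖ :=
        norm_sub_le_norm_sub_add_norm_sub _ _ _
    _ ≤ K * exp (-l * s) + |ψ s - θ s| * ‖L‖ := by
        gcongr
        · exact hwL s hs
        · exact (norm_exp_mul_I_mul_sub_le _ _ L).trans_eq (by congr 2; ring)
    _ ≤ K * exp (-l * s) + C * K / (l - C * ‖L‖) * exp (-l * s) * ‖L‖ := by
        gcongr
        exact hψθ s hs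
    _ = l * K / (l - C * ‖L‖) * exp (-l * s) := by
        field_simp
        ring

theorem exists_profile_of_norm_forcing_le {Φ : ℂ → ℝ} {C : ℝ≥0} (hΦ : LipschitzWith C Φ)
    {w F : ℝ → ℂ} (hw : Continuous w) {s₀ K l : ℝ} (hl : 0 < l)
    (hw' : ∀ s ≥ s₀, HasDerivWithinAt w (-I * (Φ (w s) * w s + F s)) (Ici s₀) s)
    (hF : ∀ s ≥ s₀, ‖F s‖ ≤ K * exp (-l * s))
    (hsmall : C * (‖w s₀‖ + K / l * exp (-l * s₀)) < l) :
    ∃ p : ℝ → ℂ, (∀ s ≥ s₀, HasDerivAt p (-I * (Φ (p s) * p s)) s) ∧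
      ∀ s ≥ s₀, ‖w s - p s‖ ≤ K / (l - C * (‖w s₀‖ + K / l * exp (-l * s₀))) * exp (-l * s) := by
  set θ : ℝ → ℝ := fun s => ∫ σ in s₀..s, Φ (w σ)
  have hθ (s : ℝ) : HasDerivAt θ (Φ (w s)) s :=
    ((hΦ.continuous.comp hw).integral_hasStrictDerivAt s₀ s).hasDerivAt
  obtain ⟨L, hL⟩ := exists_norm_sub_exp_mul_I_mul_le hl hw' (fun s _ => hθ s) hF
  have hL₀ : ‖L‖ ≤ ‖w s₀‖ + K / l * exp (-l * s₀) := by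
    have := hL s₀ le_rfl
    simp only [θ, intervalIntegral.integral_same, neg_zero, Complex.ofReal_zero, zero_mul,
      Complex.exp_zero, one_mul] at this
    linarith [norm_le_insert (w s₀) L]
  have hμ : C * ‖L‖ ≤ C * (‖w s₀‖ + K / l * exp (-l * s₀)) := by gcongr
  obtain ⟨p, hp, hpw⟩ := exists_profile_norm_sub_le hΦ hw hθ (hμ.trans_lt hsmall) hL
  refine ⟨p, hp, fun s hs => (hpw s hs).trans ?_⟩
  have hK : 0 ≤ K := nonneg_of_mul_nonneg_left ((norm_nonneg _).trans (hF s₀ le_rfl)) (exp_pos _)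
  have := sub_pos.2 hsmall
  rw [mul_div_cancel₀ _ hl.ne']
  gcongr

-- The constant extension below `s₀` makes `logTime z s₀` continuous on all of `ℝ`, so that its
-- phase `∫ Φ (logTime z s₀)` is differentiable at `s₀` from both sides.
noncomputable def logTime (z : ℝ → ℂ) (s₀ : ℝ) (s : ℝ) : ℂ := z (exp (max s s₀))

section LogTime

variable {Φ : ℂ → ℝ} {J z : ℝ → ℂ} {t₀ : ℝ}

theorem logTime_of_le {s₀ s : ℝ} (hs : s₀ ≤ s) : logTime z s₀ s = z (exp s) := by
  rw [logTime, max_eq_left hs]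

theorem continuous_logTime (ht₀ : 0 < t₀) (hz : ∀ t ≥ t₀, ContinuousAt z t) :
    Continuous (logTime z (log t₀)) := by
  refine continuous_iff_continuousAt.2 fun s => ContinuousAt.comp (g := z) (hz _ ?_) (by fun_prop)
  exact (exp_log ht₀).symm.trans_le (exp_le_exp.2 (le_max_right _ _))

theorem hasDerivWithinAt_logTime (ht₀ : 0 < t₀)
    (hz : ∀ t ≥ t₀, HasDerivAt z (-I * (Φ (z t) * z t / t + J t)) t) {s : ℝ} (hs : log t₀ ≤ s) :
    HasDerivWithinAt (logTime z (log t₀))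
      (-I * (Φ (logTime z (log t₀) s) * logTime z (log t₀) s + exp s * J (exp s)))
      (Ici (log t₀)) s := by
  have hts : t₀ ≤ exp s := by rw [← exp_log ht₀]; exact exp_le_exp.2 hs
  have hcomp := ((hz _ hts).scomp s (hasDerivAt_exp s)).hasDerivWithinAt (s := Ici (log t₀))
  rw [logTime_of_le hs]
  refine (hcomp.congr (fun x hx => logTime_of_le hx) (logTime_of_le hs)).congr_deriv ?_
  have : (exp s : ℂ) ≠ 0 := Complex.ofReal_ne_zero.2 (exp_pos s).ne'
  rw [Complex.real_smul]
  field_simp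

theorem norm_mul_comp_exp_le {E₀ lam : ℝ} (ht₀ : 0 < t₀)
    (hJ : ∀ t ≥ t₀, ‖J t‖ ≤ E₀ * t ^ (-1 - lam)) {s : ℝ} (hs : log t₀ ≤ s) :
    ‖(exp s : ℂ) * J (exp s)‖ ≤ E₀ * exp (-lam * s) := by
  have hts : t₀ ≤ exp s := by rw [← exp_log ht₀]; exact exp_le_exp.2 hs
  rw [norm_mul, Complex.norm_real, norm_of_nonneg (exp_pos s).le]
  calc exp s * ‖J (exp s)‖ ≤ exp s * (E₀ * exp s ^ (-1 - lam)) := by gcongr; exact hJ _ hts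
    _ = E₀ * exp (-lam * s) := by
        rw [rpow_def_of_pos (exp_pos s), log_exp, mul_left_comm, ← exp_add]
        ring_nf

end LogTime

theorem stmt7_general (t₀ C₀ E₀ lam : ℝ) (ht₀ : 1 ≤ t₀) (hC₀ : 0 < C₀)
    (hlam : 0 < lam)
    (Φ : ℂ → ℝ) (hΦ : ∀ z w : ℂ, |Φ z - Φ w| ≤ C₀ * ‖z - w‖)
    (J : ℝ → ℂ) (hJ : ∀ t ≥ t₀, ‖J t‖ ≤ E₀ * t ^ (-1 - lam))
    (z : ℝ → ℂ)
    (hz : ∀ t ≥ t₀, HasDerivAt z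
      (-Complex.I * (((Φ (z t) : ℝ) : ℂ) * z t / (t : ℂ) + J t)) t)
    (hsmall : C₀ * (E₀ * t₀ ^ (-lam) + ‖z t₀‖ * lam) < lam ^ 2) :
    ∃ p : ℝ → ℂ,
      (∀ s ≥ Real.log t₀,
        HasDerivAt p (-Complex.I * (((Φ (p s) : ℝ) : ℂ) * p s)) s) ∧
      (∀ t ≥ t₀, ‖z t - p (Real.log t)‖ ≤
        E₀ * lam /
          ((lam ^ 2 - C₀ * (E₀ * t₀ ^ (-lam) + ‖z t₀‖ * lam)) * t ^ lam)) := by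
  have ht₀pos : 0 < t₀ := by linarith
  have hC₀' : (C₀.toNNReal : ℝ) = C₀ := Real.coe_toNNReal _ hC₀.le
  have hΦ' : LipschitzWith C₀.toNNReal Φ :=
    .of_dist_le_mul fun a b => by rw [Real.dist_eq, dist_eq_norm, hC₀']; exact hΦ a b
  have hz₀ : logTime z (log t₀) (log t₀) = z t₀ := by rw [logTime_of_le le_rfl, exp_log ht₀pos]
  have ht₀_rpow : exp (-lam * log t₀) = t₀ ^ (-lam) := by rw [rpow_def_of_pos ht₀pos, mul_comm]
  have hD : lam ^ 2 - C₀ * (E₀ * t₀ ^ (-lam) + ‖z t₀‖ * lam)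
      = lam * (lam - C₀ * (‖z t₀‖ + E₀ / lam * t₀ ^ (-lam))) := by
    field_simp
    ring
  have hA : C₀ * (‖z t₀‖ + E₀ / lam * t₀ ^ (-lam)) < lam := by
    have := pos_of_mul_pos_right (hD ▸ sub_pos.2 hsmall) hlam.le
    linarith
  obtain ⟨p, hp, hpw⟩ := exists_profile_of_norm_forcing_le hΦ'
    (continuous_logTime ht₀pos fun t ht => (hz t ht).continuousAt) hlam
    (fun s hs => hasDerivWithinAt_logTime ht₀pos hz hs)
    (fun s hs => norm_mul_comp_exp_le ht₀pos hJ hs) (by rwa [hz₀, ht₀_rpow, hC₀'])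
  refine ⟨p, hp, fun t ht => ?_⟩
  have ht_pos : 0 < t := ht₀pos.trans_le ht
  have hs : log t₀ ≤ log t := log_le_log ht₀pos ht
  have := hpw (log t) hs
  rw [logTime_of_le hs, exp_log ht_pos, hz₀, ht₀_rpow, hC₀'] at this
  refine this.trans_eq ?_
  rw [hD, rpow_def_of_pos ht_pos, neg_mul, exp_neg]
  field_simp

/-- If z solves i z' = Φ(z)z/t + J with Φ real-valued and
C₀-Lipschitz, |J(t)| ≤ E₀t^{-1-λ}, and C₀(E₀t₀^{-λ} + |z(t₀)|λ) < λ², then there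
is a C¹ profile p with i p' = Φ(p)p and
|z(t) - p(log t)| ≤ E₀λ/({λ² - C₀(E₀t₀^{-λ} + |z(t₀)|λ)}t^λ). -/
theorem stmt7 (t₀ C₀ E₀ lam : ℝ) (ht₀ : 1 ≤ t₀) (hC₀ : 0 < C₀) (hE₀ : 0 < E₀)
    (hlam : 0 < lam)
    (Φ : ℂ → ℝ) (hΦ : ∀ z w : ℂ, |Φ z - Φ w| ≤ C₀ * ‖z - w‖)
    (J : ℝ → ℂ) (hJ : ∀ t ≥ t₀, ‖J t‖ ≤ E₀ * t ^ (-1 - lam))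
    (z : ℝ → ℂ)
    (hz : ∀ t ≥ t₀, HasDerivAt z
      (-Complex.I * (((Φ (z t) : ℝ) : ℂ) * z t / (t : ℂ) + J t)) t)
    (hsmall : C₀ * (E₀ * t₀ ^ (-lam) + ‖z t₀‖ * lam) < lam ^ 2) :
    ∃ p : ℝ → ℂ,
      (∀ s ≥ Real.log t₀,
        HasDerivAt p (-Complex.I * (((Φ (p s) : ℝ) : ℂ) * p s)) s) ∧
      (∀ t ≥ t₀, ‖z t - p (Real.log t)‖ ≤
        E₀ * lam /
          ((lam ^ 2 - C₀ * (E₀ * t₀ ^ (-lam) + ‖z t₀‖ * lam)) * t ^ lam)) :=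
  stmt7_general t₀ C₀ E₀ lam ht₀ hC₀ hlam Φ hΦ J hJ z hz hsmall
end

section
/- Under the hypotheses of the previous lemma, define z₀ = z, Θₙ(t) = ∫_{t₀}^t Φ(zₙ(τ)) dτ/τ, ζₙ = lim_{τ→∞} zₙ(τ) e^{iΘₙ(τ)}, and zₙ₊₁(t) = ζₙ e^{-iΘₙ(t)}. Then all these quantities are well-defined (the limits exist), and |zₙ₊₁(t) - zₙ(t)| ≤ (E₀/(λ t^λ)) · K^n for all n ≥ 0 and t ≥ t₀, where K = C₀(E₀ t₀^{-λ} + |z(t₀)| λ)/λ². -/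
/-!
Multiplying by `exp (i Θₙ)` removes the phase term of the equation. For `n = 0`,
`(z e^{iΘ₀})' = -i J e^{iΘ₀}` is `O(t^{-1-λ})`, so `z e^{iΘ₀}` converges to `ζ₀` at rate
`E₀ / (λ t^λ)`, which is the bound on `|z₁ - z₀|`. For `n ≥ 1`,
`zₙ e^{iΘₙ} = ζₙ₋₁ e^{i(Θₙ - Θₙ₋₁)}` and `|(Θₙ - Θₙ₋₁)'| ≤ C₀ |zₙ - zₙ₋₁| / t`, so the phase
difference converges at `C₀ / λ` times the rate of the previous step, and `|zₙ₊₁ - zₙ|` is at most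
`|ζₙ₋₁|` times that. All `ζₙ` have the modulus of `ζ₀`, which is at most
`|z(t₀)| + E₀ / (λ t₀^λ)`; this makes the ratio `K = C₀ (|z(t₀)| + E₀ / (λ t₀^λ)) / λ`.
Rates of convergence come from the mean value inequality against `t ↦ -A t^{-λ} / λ`.
-/

open Filter Set Topology Complex

section DecayingDerivative

variable {E : Type*} [NormedAddCommGroup E] [NormedSpace ℝ E] {f f' : ℝ → E} {t₀ A lam : ℝ}

theorem norm_sub_le_of_norm_deriv_le_rpow (ht₀ : 0 < t₀) (hlam : 0 < lam)
    (hf : ∀ t ≥ t₀, HasDerivWithinAt f (f' t) (Ici t₀) t)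
    (hf' : ∀ t ≥ t₀, ‖f' t‖ ≤ A * t ^ (-1 - lam)) {t s : ℝ} (ht : t₀ ≤ t) (hts : t ≤ s) :
    ‖f s - f t‖ ≤ A / (lam * t ^ lam) := by
  have hA : 0 ≤ A :=
    nonneg_of_mul_nonneg_left ((norm_nonneg _).trans (hf' t₀ le_rfl)) (by positivity)
  have hpos : ∀ x ∈ Icc t s, 0 < x := fun x hx => ht₀.trans_le (ht.trans hx.1)
  -- `B` is the primitive of the majorant `A * x ^ (-1 - lam)` vanishing at `t`.
  set B : ℝ → ℝ := fun x => A * (t ^ (-lam) - x ^ (-lam)) / lam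
  have hB : ∀ x ∈ Icc t s, HasDerivAt B (A * x ^ (-1 - lam)) x := fun x hx => by
    have := ((Real.hasDerivAt_rpow_const (p := -lam) (Or.inl (hpos x hx).ne')).const_sub
      (t ^ (-lam))).const_mul A |>.div_const lam
    refine this.congr_deriv ?_
    rw [show -lam - 1 = -1 - lam by ring]
    field_simp
  have key := image_norm_le_of_norm_deriv_right_le_deriv_boundary' (f := fun x => f x - f t)
    (a := t) (b := s) (B := B)
    (fun x hx => ((hf x (ht.trans hx.1)).continuousWithinAt.mono
      (Icc_subset_Ici_self.trans (Ici_subset_Ici.2 ht))).sub continuousWithinAt_const)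
    (fun x hx => ((hf x (ht.trans hx.1)).mono (Ici_subset_Ici.2 (ht.trans hx.1))).sub_const _)
    (by simp [B]) (fun x hx => (hB x hx).continuousAt.continuousWithinAt)
    (fun x hx => (hB x (Ico_subset_Icc_self hx)).hasDerivWithinAt)
    (fun x hx => hf' x (ht.trans hx.1)) ⟨hts, le_rfl⟩
  calc ‖f s - f t‖ ≤ B s := key
    _ ≤ A * t ^ (-lam) / lam := by
      have : 0 ≤ s ^ (-lam) := Real.rpow_nonneg (hpos s ⟨hts, le_rfl⟩).le _
      simp only [B]; gcongr; linarith
    _ = A / (lam * t ^ lam) := by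
      rw [Real.rpow_neg (ht₀.trans_le ht).le]; field_simp

theorem exists_tendsto_of_norm_deriv_le_rpow [CompleteSpace E] (ht₀ : 0 < t₀) (hlam : 0 < lam)
    (hf : ∀ t ≥ t₀, HasDerivWithinAt f (f' t) (Ici t₀) t)
    (hf' : ∀ t ≥ t₀, ‖f' t‖ ≤ A * t ^ (-1 - lam)) :
    ∃ L, Tendsto f atTop (𝓝 L) ∧ ∀ t ≥ t₀, ‖L - f t‖ ≤ A / (lam * t ^ lam) := by
  have hsub := fun {t s} => norm_sub_le_of_norm_deriv_le_rpow ht₀ hlam hf hf' (t := t) (s := s)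
  have hdecay : Tendsto (fun t => A / (lam * t ^ lam)) atTop (𝓝 0) := by
    have := (tendsto_rpow_neg_atTop hlam).const_mul (A / lam)
    rw [mul_zero] at this
    refine this.congr' ?_
    filter_upwards [eventually_gt_atTop 0] with t ht
    rw [Real.rpow_neg ht.le]; field_simp
  obtain ⟨L, hL⟩ : ∃ L, Tendsto f atTop (𝓝 L) := by
    refine cauchySeq_tendsto_of_complete (Metric.cauchySeq_iff'.2 fun ε hε => ?_)
    obtain ⟨N, hN, hNε⟩ :=
      ((eventually_ge_atTop t₀).and (hdecay.eventually (gt_mem_nhds hε))).exists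
    exact ⟨N, fun s hs => (dist_eq_norm _ _).trans_lt ((hsub hN hs).trans_lt hNε)⟩
  refine ⟨L, hL, fun t ht => le_of_tendsto ((hL.sub_const (f t)).norm) ?_⟩
  filter_upwards [eventually_ge_atTop t] with s hs using hsub ht hs

end DecayingDerivative

theorem hasDerivWithinAt_integral_Ici {E : Type*} [NormedAddCommGroup E] [NormedSpace ℝ E]
    [CompleteSpace E] {g : ℝ → E} {a x : ℝ} (hg : ContinuousOn g (Ici a)) (hx : a ≤ x) :
    HasDerivWithinAt (fun u => ∫ τ in a..u, g τ) (g x) (Ici a) x := by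
  rcases hx.eq_or_lt with rfl | hx
  · exact intervalIntegral.integral_hasDerivWithinAt_right (t := Ioi a) .refl
      ((hg.mono Ioi_subset_Ici_self).stronglyMeasurableAtFilter_nhdsWithin measurableSet_Ioi a)
      ((hg a self_mem_Ici).mono Ioi_subset_Ici_self)
  · refine (intervalIntegral.integral_hasDerivAt_right ?_ ?_ ?_).hasDerivWithinAt
    · exact (hg.mono fun y hy => by rw [uIcc_of_le hx.le] at hy; exact hy.1).intervalIntegrable
    · exact (hg.mono Ioi_subset_Ici_self).stronglyMeasurableAtFilter isOpen_Ioi x hx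
    · exact hg.continuousAt (Ici_mem_nhds hx)

theorem norm_exp_I_mul_sub_exp_I_mul_le (a b : ℝ) :
    ‖exp (I * a) - exp (I * b)‖ ≤ |a - b| := by
  have : exp (I * a) - exp (I * b) = exp (I * b) * (exp (I * ↑(a - b)) - 1) := by
    rw [mul_sub, ← exp_add]; push_cast; ring_nf
  rw [this, norm_mul, norm_exp_I_mul_ofReal, one_mul]
  exact Real.norm_exp_I_mul_ofReal_sub_one_le

section PhaseIteration

variable (t₀ : ℝ) (Φ : ℂ → ℝ)

noncomputable def phase (f : ℝ → ℂ) (t : ℝ) : ℝ :=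
  ∫ τ in t₀..t, Φ (f τ) / τ

noncomputable def scatteringLimit (f : ℝ → ℂ) : ℂ :=
  limUnder atTop fun τ => f τ * exp (I * phase t₀ Φ f τ)

noncomputable def phaseStep (f : ℝ → ℂ) (t : ℝ) : ℂ :=
  scatteringLimit t₀ Φ f * exp (-I * phase t₀ Φ f t)

noncomputable def phaseIterate (z : ℝ → ℂ) : ℕ → ℝ → ℂ
  | 0 => z
  | n + 1 => phaseStep t₀ Φ (phaseIterate z n)

variable {t₀ Φ} {f : ℝ → ℂ} {a lam : ℝ} {C : NNReal}

theorem hasDerivWithinAt_phase (ht₀ : 0 < t₀) (hΦ : Continuous Φ) (hf : ContinuousOn f (Ici t₀))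
    {t : ℝ} (ht : t₀ ≤ t) : HasDerivWithinAt (phase t₀ Φ f) (Φ (f t) / t) (Ici t₀) t :=
  hasDerivWithinAt_integral_Ici ((hΦ.comp_continuousOn hf).div continuousOn_id
    fun _ hτ => (ht₀.trans_le hτ).ne') ht

theorem continuousOn_phaseStep (ht₀ : 0 < t₀) (hΦ : Continuous Φ)
    (hf : ContinuousOn f (Ici t₀)) : ContinuousOn (phaseStep t₀ Φ f) (Ici t₀) :=
  continuousOn_const.mul (continuous_exp.comp_continuousOn (continuousOn_const.mul
    (continuous_ofReal.comp_continuousOn fun _ ht =>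
      (hasDerivWithinAt_phase ht₀ hΦ hf ht).continuousWithinAt)))

theorem phaseStep_mul_exp (f : ℝ → ℂ) (t θ : ℝ) :
    phaseStep t₀ Φ f t * exp (I * θ) =
      scatteringLimit t₀ Φ f * exp (I * ↑(θ - phase t₀ Φ f t)) := by
  rw [phaseStep, mul_assoc, ← exp_add]; push_cast; ring_nf

theorem norm_phaseStep_sub (f : ℝ → ℂ) (t : ℝ) :
    ‖phaseStep t₀ Φ f t - f t‖ = ‖scatteringLimit t₀ Φ f - f t * exp (I * phase t₀ Φ f t)‖ := by
  rw [← mul_one ‖phaseStep t₀ Φ f t - f t‖, ← norm_exp_I_mul_ofReal (phase t₀ Φ f t), ← norm_mul,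
    sub_mul, phaseStep_mul_exp, sub_self, ofReal_zero, mul_zero, exp_zero, mul_one]

theorem tendsto_mul_exp_phase_of_hasDerivAt {J z : ℝ → ℂ} {E₀ : ℝ} (ht₀ : 0 < t₀)
    (hlam : 0 < lam) (hΦ : Continuous Φ) (hJ : ∀ t ≥ t₀, ‖J t‖ ≤ E₀ * t ^ (-1 - lam))
    (hz : ∀ t ≥ t₀, HasDerivAt z (-I * ((Φ (z t) : ℂ) * z t / t + J t)) t) :
    Tendsto (fun τ => z τ * exp (I * phase t₀ Φ z τ)) atTop (𝓝 (scatteringLimit t₀ Φ z)) ∧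
      ∀ t ≥ t₀, ‖phaseStep t₀ Φ z t - z t‖ ≤ E₀ / (lam * t ^ lam) := by
  have hzc : ContinuousOn z (Ici t₀) := fun t ht => (hz t ht).continuousAt.continuousWithinAt
  have hw : ∀ t ≥ t₀, HasDerivWithinAt (fun τ => z τ * exp (I * phase t₀ Φ z τ))
      (-I * J t * exp (I * phase t₀ Φ z t)) (Ici t₀) t := fun t ht => by
    have := (hz t ht).hasDerivWithinAt.mul
      ((hasDerivWithinAt_phase ht₀ hΦ hzc ht).ofReal_comp.const_mul I).cexp
    refine this.congr_deriv ?_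
    push_cast
    ring
  obtain ⟨L, hL, hrate⟩ := exists_tendsto_of_norm_deriv_le_rpow ht₀ hlam hw fun t ht => by
    rw [norm_mul, norm_exp_I_mul_ofReal, mul_one, norm_mul, norm_neg, norm_I, one_mul]
    exact hJ t ht
  have hζ : scatteringLimit t₀ Φ z = L := hL.limUnder_eq
  refine ⟨hζ ▸ hL, fun t ht => ?_⟩
  rw [norm_phaseStep_sub, hζ]
  exact hrate t ht

theorem norm_phaseStep (f : ℝ → ℂ) (t : ℝ) :
    ‖phaseStep t₀ Φ f t‖ = ‖scatteringLimit t₀ Φ f‖ := by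
  rw [phaseStep, norm_mul, neg_mul, ← mul_neg, ← ofReal_neg, norm_exp_I_mul_ofReal, mul_one]

theorem exists_tendsto_phase_sub (ht₀ : 0 < t₀) (hlam : 0 < lam) (hΦ : LipschitzWith C Φ)
    {g : ℝ → ℂ} (hf : ContinuousOn f (Ici t₀)) (hg : ContinuousOn g (Ici t₀))
    (hfg : ∀ t ≥ t₀, ‖g t - f t‖ ≤ a / (lam * t ^ lam)) :
    ∃ δ, Tendsto (fun t => phase t₀ Φ g t - phase t₀ Φ f t) atTop (𝓝 δ) ∧
      ∀ t ≥ t₀, |δ - (phase t₀ Φ g t - phase t₀ Φ f t)| ≤ C * a / lam / (lam * t ^ lam) := by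
  refine exists_tendsto_of_norm_deriv_le_rpow ht₀ hlam (fun t ht =>
    (hasDerivWithinAt_phase ht₀ hΦ.continuous hg ht).sub
      (hasDerivWithinAt_phase ht₀ hΦ.continuous hf ht)) fun t ht => ?_
  have htpos : 0 < t := ht₀.trans_le ht
  calc ‖Φ (g t) / t - Φ (f t) / t‖ = dist (Φ (g t)) (Φ (f t)) / t := by
        rw [← sub_div, norm_div, Real.norm_of_nonneg htpos.le, dist_eq_norm]
    _ ≤ C * (a / (lam * t ^ lam)) / t := by
        gcongr
        exact (hΦ.dist_le_mul _ _).trans (by rw [dist_eq_norm]; gcongr; exact hfg t ht)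
    _ = C * a / lam * t ^ (-1 - lam) := by
        rw [show -1 - lam = -(lam + 1) by ring, Real.rpow_neg htpos.le,
          Real.rpow_add_one htpos.ne']
        field_simp

theorem phaseStep_phaseStep_estimate {M : ℝ} (ht₀ : 0 < t₀) (hlam : 0 < lam)
    (hΦ : LipschitzWith C Φ) (hf : ContinuousOn f (Ici t₀))
    (hstep : ∀ t ≥ t₀, ‖phaseStep t₀ Φ f t - f t‖ ≤ a / (lam * t ^ lam))
    (hM : ‖scatteringLimit t₀ Φ f‖ ≤ M) :
    Tendsto (fun τ => phaseStep t₀ Φ f τ * exp (I * phase t₀ Φ (phaseStep t₀ Φ f) τ)) atTop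
        (𝓝 (scatteringLimit t₀ Φ (phaseStep t₀ Φ f))) ∧
      ‖scatteringLimit t₀ Φ (phaseStep t₀ Φ f)‖ = ‖scatteringLimit t₀ Φ f‖ ∧
      ∀ t ≥ t₀, ‖phaseStep t₀ Φ (phaseStep t₀ Φ f) t - phaseStep t₀ Φ f t‖ ≤
        a * (C * M / lam) / (lam * t ^ lam) := by
  set g := phaseStep t₀ Φ f
  set ζ := scatteringLimit t₀ Φ f
  obtain ⟨δ, hδ, hrate⟩ := exists_tendsto_phase_sub ht₀ hlam hΦ hf
    (continuousOn_phaseStep ht₀ hΦ.continuous hf) hstep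
  have hL : Tendsto (fun τ => g τ * exp (I * phase t₀ Φ g τ)) atTop (𝓝 (ζ * exp (I * δ))) := by
    simp_rw [g, phaseStep_mul_exp]
    exact tendsto_const_nhds.mul ((hδ.ofReal.const_mul I).cexp)
  have hζ : scatteringLimit t₀ Φ g = ζ * exp (I * δ) := hL.limUnder_eq
  refine ⟨hζ ▸ hL, by rw [hζ, norm_mul, norm_exp_I_mul_ofReal, mul_one], fun t ht => ?_⟩
  rw [norm_phaseStep_sub, hζ, phaseStep_mul_exp, ← mul_sub, norm_mul]
  calc ‖ζ‖ * ‖exp (I * δ) - exp (I * ↑(phase t₀ Φ g t - phase t₀ Φ f t))‖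
      ≤ ‖ζ‖ * (C * a / lam / (lam * t ^ lam)) := by
        gcongr
        exact (norm_exp_I_mul_sub_exp_I_mul_le _ _).trans (hrate t ht)
    _ ≤ M * (C * a / lam / (lam * t ^ lam)) :=
        mul_le_mul_of_nonneg_right hM ((abs_nonneg _).trans (hrate t ht))
    _ = a * (C * M / lam) / (lam * t ^ lam) := by ring

theorem phaseIterate_estimate {J z : ℝ → ℂ} {E₀ : ℝ} (ht₀ : 0 < t₀) (hlam : 0 < lam)
    (hΦ : LipschitzWith C Φ) (hJ : ∀ t ≥ t₀, ‖J t‖ ≤ E₀ * t ^ (-1 - lam))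
    (hz : ∀ t ≥ t₀, HasDerivAt z (-I * ((Φ (z t) : ℂ) * z t / t + J t)) t) (n : ℕ) :
    ContinuousOn (phaseIterate t₀ Φ z n) (Ici t₀) ∧
      Tendsto (fun τ => phaseIterate t₀ Φ z n τ * exp (I * phase t₀ Φ (phaseIterate t₀ Φ z n) τ))
        atTop (𝓝 (scatteringLimit t₀ Φ (phaseIterate t₀ Φ z n))) ∧
      ‖scatteringLimit t₀ Φ (phaseIterate t₀ Φ z n)‖ ≤ ‖z t₀‖ + E₀ / (lam * t₀ ^ lam) ∧
      ∀ t ≥ t₀, ‖phaseIterate t₀ Φ z (n + 1) t - phaseIterate t₀ Φ z n t‖ ≤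
        E₀ * (C * (‖z t₀‖ + E₀ / (lam * t₀ ^ lam)) / lam) ^ n / (lam * t ^ lam) := by
  induction n with
  | zero =>
    obtain ⟨hlim, hstep⟩ := tendsto_mul_exp_phase_of_hasDerivAt ht₀ hlam hΦ.continuous hJ hz
    refine ⟨fun t ht => (hz t ht).continuousAt.continuousWithinAt, hlim, ?_, ?_⟩
    · rw [phaseIterate, ← norm_phaseStep z t₀]
      exact (norm_le_norm_add_norm_sub' _ _).trans (by gcongr; exact hstep t₀ le_rfl)
    · simpa [phaseIterate] using hstep
  | succ n ih =>
    obtain ⟨hcont, -, hζ, hstep⟩ := ih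
    obtain ⟨hlim, hnorm, hstep'⟩ :=
      phaseStep_phaseStep_estimate ht₀ hlam hΦ hcont hstep hζ
    refine ⟨continuousOn_phaseStep ht₀ hΦ.continuous hcont, hlim, hnorm ▸ hζ, fun t ht => ?_⟩
    rw [pow_succ, ← mul_assoc]
    exact hstep' t ht

end PhaseIteration

theorem stmt8_general (t₀ C₀ E₀ lam : ℝ) (ht₀ : 1 ≤ t₀) (hC₀ : 0 < C₀)
    (hlam : 0 < lam)
    (Φ : ℂ → ℝ) (hΦ : ∀ z w : ℂ, |Φ z - Φ w| ≤ C₀ * ‖z - w‖)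
    (J : ℝ → ℂ) (hJ : ∀ t ≥ t₀, ‖J t‖ ≤ E₀ * t ^ (-1 - lam))
    (z : ℝ → ℂ)
    (hz : ∀ t ≥ t₀, HasDerivAt z
      (-Complex.I * (((Φ (z t) : ℝ) : ℂ) * z t / (t : ℂ) + J t)) t) :
    ∃ (Z : ℕ → ℝ → ℂ) (Θ : ℕ → ℝ → ℝ) (ζ : ℕ → ℂ),
      Z 0 = z ∧
      (∀ n, ∀ t ≥ t₀, Θ n t = ∫ τ in t₀..t, Φ (Z n τ) / τ) ∧
      (∀ n, Tendsto (fun τ => Z n τ * Complex.exp (Complex.I * (Θ n τ : ℂ)))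
        atTop (nhds (ζ n))) ∧
      (∀ n, ∀ t ≥ t₀, Z (n + 1) t = ζ n * Complex.exp (-Complex.I * (Θ n t : ℂ))) ∧
      (∀ n : ℕ, ∀ t ≥ t₀, ‖Z (n + 1) t - Z n t‖ ≤
        E₀ / (lam * t ^ lam) *
          (C₀ * (E₀ * t₀ ^ (-lam) + ‖z t₀‖ * lam) / lam ^ 2) ^ n) := by
  have ht₀_pos : 0 < t₀ := by linarith
  have hΦ_lip : LipschitzWith C₀.toNNReal Φ :=
    LipschitzWith.of_dist_le' fun x y => by simpa [Real.dist_eq, dist_eq_norm] using hΦ x y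
  have hK : C₀ * (‖z t₀‖ + E₀ / (lam * t₀ ^ lam)) / lam =
      C₀ * (E₀ * t₀ ^ (-lam) + ‖z t₀‖ * lam) / lam ^ 2 := by
    rw [Real.rpow_neg ht₀_pos.le]
    field_simp
    ring
  have key := phaseIterate_estimate ht₀_pos hlam hΦ_lip hJ hz
  refine ⟨phaseIterate t₀ Φ z, fun n => phase t₀ Φ (phaseIterate t₀ Φ z n),
    fun n => scatteringLimit t₀ Φ (phaseIterate t₀ Φ z n), rfl, fun _ _ _ => rfl,
    fun n => (key n).2.1, fun _ _ _ => rfl, fun n t ht => ?_⟩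
  have hbound := (key n).2.2.2 t ht
  rw [Real.coe_toNNReal _ hC₀.le, hK] at hbound
  rwa [div_mul_eq_mul_div]

/-- The iteration z₀ = z, Θₙ(t) = ∫_{t₀}^t Φ(zₙ(τ))dτ/τ,
ζₙ = lim_{τ→∞} zₙ(τ)e^{iΘₙ(τ)}, zₙ₊₁(t) = ζₙe^{-iΘₙ(t)} is well-defined and
satisfies |zₙ₊₁(t) - zₙ(t)| ≤ (E₀/(λt^λ))Kⁿ with
K = C₀(E₀t₀^{-λ} + |z(t₀)|λ)/λ². -/
theorem stmt8 (t₀ C₀ E₀ lam : ℝ) (ht₀ : 1 ≤ t₀) (hC₀ : 0 < C₀) (hE₀ : 0 < E₀)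
    (hlam : 0 < lam)
    (Φ : ℂ → ℝ) (hΦ : ∀ z w : ℂ, |Φ z - Φ w| ≤ C₀ * ‖z - w‖)
    (J : ℝ → ℂ) (hJ : ∀ t ≥ t₀, ‖J t‖ ≤ E₀ * t ^ (-1 - lam))
    (z : ℝ → ℂ)
    (hz : ∀ t ≥ t₀, HasDerivAt z
      (-Complex.I * (((Φ (z t) : ℝ) : ℂ) * z t / (t : ℂ) + J t)) t)
    (hK : C₀ * (E₀ * t₀ ^ (-lam) + ‖z t₀‖ * lam) / lam ^ 2 < 1) :
    ∃ (Z : ℕ → ℝ → ℂ) (Θ : ℕ → ℝ → ℝ) (ζ : ℕ → ℂ),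
      Z 0 = z ∧
      (∀ n, ∀ t ≥ t₀, Θ n t = ∫ τ in t₀..t, Φ (Z n τ) / τ) ∧
      (∀ n, Tendsto (fun τ => Z n τ * Complex.exp (Complex.I * (Θ n τ : ℂ)))
        atTop (nhds (ζ n))) ∧
      (∀ n, ∀ t ≥ t₀, Z (n + 1) t = ζ n * Complex.exp (-Complex.I * (Θ n t : ℂ))) ∧
      (∀ n : ℕ, ∀ t ≥ t₀, ‖Z (n + 1) t - Z n t‖ ≤
        E₀ / (lam * t ^ lam) *
          (C₀ * (E₀ * t₀ ^ (-lam) + ‖z t₀‖ * lam) / lam ^ 2) ^ n) :=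
  stmt8_general t₀ C₀ E₀ lam ht₀ hC₀ hlam Φ hΦ J hJ z hz
end

section
/- Fix a real number c ≠ 0. Let (X,Y) : [s₀,∞) → ℝ² be a C¹ solution of X' = c X Y, Y' = -c X². Then X(s)² + Y(s)² is constant, say equal to ρ² with ρ ≥ 0; and if ρ > 0 the solution is given explicitly by Y(s) = ρ((ρ+η)e^{-cρs} - (ρ-η)e^{cρs}) / ((ρ+η)e^{-cρs} + (ρ-η)e^{cρs}) and X(s) = 2ρξ / ((ρ+η)e^{-cρs} + (ρ-η)e^{cρs}) for some real constants ξ, η with ξ² + η² = ρ². -/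
/-!
Differentiating `X² + Y²` along the flow gives `2cX²Y - 2cX²Y = 0`, so `X² + Y² ≡ ρ²`, and then
`Y' = -c(ρ + Y)(ρ - Y)` is a Riccati equation. Its gauge-transformed halves
`u = (ρ + Y) e^{cρs}` and `v = (ρ - Y) e^{-cρs}` solve the same linear equation `f' = cY f` as `X`,
whose coefficient is bounded by `|c|ρ`; by Grönwall, `u`, `v` and `X` are proportional to `u + v`
with the constant ratios they have at `s₀`. Those ratios are `(ρ + η) : (ρ - η) : ξ`, and
`ξ² + η² = ρ²` is `X(s₀)² = u(s₀) v(s₀)`.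
-/

open Real

theorem eq_of_hasDerivAt_zero_of_ge {E : Type*} [NormedAddCommGroup E] [NormedSpace ℝ E]
    {f : ℝ → E} {s₀ : ℝ} (hf : ∀ s ≥ s₀, HasDerivAt f 0 s) : ∀ s ≥ s₀, f s = f s₀ :=
  fun s hs =>
  constant_of_has_deriv_right_zero (fun x hx => (hf x hx.1).continuousAt.continuousWithinAt)
    (fun x hx => (hf x hx.1).hasDerivWithinAt) s ⟨hs, le_rfl⟩

theorem eq_zero_of_hasDerivAt_smul_self_of_ge {E : Type*} [NormedAddCommGroup E]
    [NormedSpace ℝ E] {f : ℝ → E} {g : ℝ → ℝ} {s₀ K : ℝ} (hg : ∀ s ≥ s₀, |g s| ≤ K)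
    (hf : ∀ s ≥ s₀, HasDerivAt f (g s • f s) s) (h₀ : f s₀ = 0) : ∀ s ≥ s₀, f s = 0 :=
  fun s hs =>
  eq_zero_of_abs_deriv_le_mul_abs_self_of_eq_zero_right
    (fun x hx => (hf x hx.1).continuousAt.continuousWithinAt)
    (fun x hx => (hf x hx.1).hasDerivWithinAt) h₀
    (fun x hx => by
      rw [norm_smul, Real.norm_eq_abs]
      exact mul_le_mul_of_nonneg_right (hg x hx.1) (norm_nonneg _)) s ⟨hs, le_rfl⟩

theorem mul_eq_mul_of_hasDerivAt_mul_self_of_ge {f h g : ℝ → ℝ} {s₀ K : ℝ}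
    (hg : ∀ s ≥ s₀, |g s| ≤ K) (hf : ∀ s ≥ s₀, HasDerivAt f (g s * f s) s)
    (hh : ∀ s ≥ s₀, HasDerivAt h (g s * h s) s) : ∀ s ≥ s₀, f s * h s₀ = h s * f s₀ := by
  intro s hs
  rw [← sub_eq_zero]
  refine eq_zero_of_hasDerivAt_smul_self_of_ge (f := fun t => f t * h s₀ - h t * f s₀) hg
    (fun t ht => ?_) (by ring) s hs
  refine (((hf t ht).mul_const (h s₀)).sub ((hh t ht).mul_const (f s₀))).congr_deriv ?_
  rw [smul_eq_mul]
  ring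

theorem explicit_form_of_proportional {ρ η ξ a b κ x y : ℝ} (hρ : ρ ≠ 0) (hab : a * b = 1)
    (hu : (ρ + y) * b = κ * (ρ + η)) (hv : (ρ - y) * a = κ * (ρ - η)) (hx : x = κ * ξ) :
    y = ρ * ((ρ + η) * a - (ρ - η) * b) / ((ρ + η) * a + (ρ - η) * b) ∧
      x = 2 * ρ * ξ / ((ρ + η) * a + (ρ - η) * b) := by
  have hD : κ * ((ρ + η) * a + (ρ - η) * b) = 2 * ρ := by
    linear_combination (-a) * hu - b * hv + 2 * ρ * hab
  have hne : κ * ((ρ + η) * a + (ρ - η) * b) ≠ 0 := by rw [hD]; simpa using hρ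
  have hD₀ := right_ne_zero_of_mul hne
  have hκ := left_ne_zero_of_mul hne
  constructor
  · rw [eq_div_iff hD₀]
    refine mul_left_cancel₀ hκ ?_
    linear_combination y * hD + ρ * a * hu - ρ * b * hv - 2 * ρ * y * hab
  · rw [eq_div_iff hD₀, hx]
    linear_combination ξ * hD

theorem sq_add_sq_eq_of_hasDerivAt {c s₀ : ℝ} {X Y : ℝ → ℝ}
    (hX : ∀ s ≥ s₀, HasDerivAt X (c * X s * Y s) s)
    (hY : ∀ s ≥ s₀, HasDerivAt Y (-c * X s ^ 2) s) :
    ∀ s ≥ s₀, X s ^ 2 + Y s ^ 2 = X s₀ ^ 2 + Y s₀ ^ 2 :=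
  eq_of_hasDerivAt_zero_of_ge (f := fun t => X t ^ 2 + Y t ^ 2) fun t ht =>
    (((hX t ht).pow 2).add ((hY t ht).pow 2)).congr_deriv (by ring)

theorem hasDerivAt_add_mul_exp {c s₀ ρ : ℝ} {X Y : ℝ → ℝ}
    (hY : ∀ s ≥ s₀, HasDerivAt Y (-c * X s ^ 2) s)
    (hcons : ∀ s ≥ s₀, X s ^ 2 + Y s ^ 2 = ρ ^ 2) :
    ∀ s ≥ s₀, HasDerivAt (fun t => (ρ + Y t) * exp (c * ρ * t))
      (c * Y s * ((ρ + Y s) * exp (c * ρ * s))) s := fun s hs =>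
  (((hY s hs).const_add ρ).mul ((hasDerivAt_id s).const_mul (c * ρ)).exp).congr_deriv
    (by simp only [id]; linear_combination (-c * exp (c * ρ * s)) * hcons s hs)

theorem hasDerivAt_sub_mul_exp {c s₀ ρ : ℝ} {X Y : ℝ → ℝ}
    (hY : ∀ s ≥ s₀, HasDerivAt Y (-c * X s ^ 2) s)
    (hcons : ∀ s ≥ s₀, X s ^ 2 + Y s ^ 2 = ρ ^ 2) :
    ∀ s ≥ s₀, HasDerivAt (fun t => (ρ - Y t) * exp (-c * ρ * t))
      (c * Y s * ((ρ - Y s) * exp (-c * ρ * s))) s := fun s hs =>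
  (((hY s hs).const_sub ρ).mul ((hasDerivAt_id s).const_mul (-c * ρ)).exp).congr_deriv
    (by simp only [id]; linear_combination (c * exp (-c * ρ * s)) * hcons s hs)

theorem add_mul_exp_add_sub_mul_exp_pos {ρ y : ℝ} (hρ : 0 < ρ) (hy : |y| ≤ ρ) (k : ℝ) :
    0 < (ρ + y) * exp k + (ρ - y) * exp (-k) := by
  obtain ⟨h₁, h₂⟩ := abs_le.mp hy
  rcases h₁.lt_or_eq with h | h
  · exact add_pos_of_pos_of_nonneg (mul_pos (by linarith) (exp_pos _))
      (mul_nonneg (by linarith) (exp_pos _).le)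
  · exact add_pos_of_nonneg_of_pos (mul_nonneg (by linarith) (exp_pos _).le)
      (mul_pos (by linarith) (exp_pos _))

theorem sq_add_sq_of_sq_eq_mul {ρ u v x : ℝ} (h : u + v ≠ 0) (hx : x ^ 2 = u * v) :
    (2 * ρ * x / (u + v)) ^ 2 + (ρ * (u - v) / (u + v)) ^ 2 = ρ ^ 2 := by
  field_simp
  linear_combination 4 * ρ ^ 2 * hx

theorem stmt9_general (c s₀ ρ : ℝ)
    (X Y : ℝ → ℝ)
    (hX : ∀ s ≥ s₀, HasDerivAt X (c * X s * Y s) s)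
    (hY : ∀ s ≥ s₀, HasDerivAt Y (-c * X s ^ 2) s)
    (hinit : X s₀ ^ 2 + Y s₀ ^ 2 = ρ ^ 2) :
    (∀ s ≥ s₀, X s ^ 2 + Y s ^ 2 = ρ ^ 2) ∧
    (0 < ρ → ∃ ξ η : ℝ, ξ ^ 2 + η ^ 2 = ρ ^ 2 ∧
      ∀ s ≥ s₀,
        Y s = ρ * ((ρ + η) * Real.exp (-c * ρ * s) - (ρ - η) * Real.exp (c * ρ * s)) /
          ((ρ + η) * Real.exp (-c * ρ * s) + (ρ - η) * Real.exp (c * ρ * s)) ∧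
        X s = 2 * ρ * ξ /
          ((ρ + η) * Real.exp (-c * ρ * s) + (ρ - η) * Real.exp (c * ρ * s))) := by
  have hcons : ∀ s ≥ s₀, X s ^ 2 + Y s ^ 2 = ρ ^ 2 := hinit ▸ sq_add_sq_eq_of_hasDerivAt hX hY
  refine ⟨hcons, fun hρ => ?_⟩
  have hYρ : ∀ s ≥ s₀, |Y s| ≤ ρ := fun s hs =>
    abs_le_of_sq_le_sq' (by nlinarith [hcons s hs]) hρ.le |> abs_le.mpr
  have hbound : ∀ s ≥ s₀, |c * Y s| ≤ |c| * ρ := fun s hs => by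
    rw [abs_mul]; gcongr; exact hYρ s hs
  set u : ℝ → ℝ := fun s => (ρ + Y s) * exp (c * ρ * s)
  set v : ℝ → ℝ := fun s => (ρ - Y s) * exp (-c * ρ * s)
  have hu := hasDerivAt_add_mul_exp hY hcons
  have hv := hasDerivAt_sub_mul_exp hY hcons
  have hprop := fun {f : ℝ → ℝ} (hf : ∀ s ≥ s₀, HasDerivAt f (c * Y s * f s) s) =>
    mul_eq_mul_of_hasDerivAt_mul_self_of_ge (h := fun t => u t + v t) hbound hf
      fun s hs => ((hu s hs).add (hv s hs)).congr_deriv (by ring)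
  have hW₀ : u s₀ + v s₀ ≠ 0 := by
    simpa only [u, v, neg_mul, mul_assoc]
      using (add_mul_exp_add_sub_mul_exp_pos hρ (hYρ s₀ le_rfl) (c * (ρ * s₀))).ne'
  have hab (s : ℝ) : exp (-c * ρ * s) * exp (c * ρ * s) = 1 := by
    rw [← exp_add]; simp
  refine ⟨2 * ρ * X s₀ / (u s₀ + v s₀), ρ * (u s₀ - v s₀) / (u s₀ + v s₀), ?_, fun s hs => ?_⟩
  · exact sq_add_sq_of_sq_eq_mul hW₀ (by linear_combination hinit - (ρ ^ 2 - Y s₀ ^ 2) * hab s₀)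
  · -- adding `u = κ (ρ + η)` and `v = κ (ρ - η)` forces `κ = (u + v) / (2ρ)`
    refine explicit_form_of_proportional (κ := (u s + v s) / (2 * ρ)) hρ.ne' (hab s) ?_ ?_ ?_
    · show u s = _
      field_simp
      linear_combination 2 * hprop hu s hs
    · show v s = _
      field_simp
      linear_combination 2 * hprop hv s hs
    · field_simp
      linear_combination hprop (fun s hs => (hX s hs).congr_deriv (by ring)) s hs

/-- For the planar system X' = cXY, Y' = -cX² with c ≠ 0, the
quantity X² + Y² ≡ ρ² is conserved, and if ρ > 0 the solution has the stated
explicit form with constants ξ, η satisfying ξ² + η² = ρ². -/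
theorem stmt9 (c s₀ ρ : ℝ) (hc : c ≠ 0) (hρ : 0 ≤ ρ)
    (X Y : ℝ → ℝ)
    (hX : ∀ s ≥ s₀, HasDerivAt X (c * X s * Y s) s)
    (hY : ∀ s ≥ s₀, HasDerivAt Y (-c * X s ^ 2) s)
    (hinit : X s₀ ^ 2 + Y s₀ ^ 2 = ρ ^ 2) :
    (∀ s ≥ s₀, X s ^ 2 + Y s ^ 2 = ρ ^ 2) ∧
    (0 < ρ → ∃ ξ η : ℝ, ξ ^ 2 + η ^ 2 = ρ ^ 2 ∧
      ∀ s ≥ s₀,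
        Y s = ρ * ((ρ + η) * Real.exp (-c * ρ * s) - (ρ - η) * Real.exp (c * ρ * s)) /
          ((ρ + η) * Real.exp (-c * ρ * s) + (ρ - η) * Real.exp (c * ρ * s)) ∧
        X s = 2 * ρ * ξ /
          ((ρ + η) * Real.exp (-c * ρ * s) + (ρ - η) * Real.exp (c * ρ * s))) :=
  stmt9_general c s₀ ρ X Y hX hY hinit
end

section
/- Every C¹ solution p : [s₀,∞) → ℂ of i p'(s) = (c(ω)/2)(Re p(s)) p(s), with c(ω) ∈ ℝ, converges as s → ∞; moreover if c(ω) ≠ 0 then the limit is a purely imaginary number, i.e., Re(lim_{s→∞} p(s)) = 0. -/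
/-!
Writing `p = X + iY`, the equation becomes `X' = k X Y`, `Y' = -k X²` with `k = c/2`.
The quantity `X² + Y² = |p|²` is conserved, so `kY` is bounded, and it is nonincreasing because
`(kY)' = -k² X²`; hence `Y` converges when `k ≠ 0`. Then `X² = |p|² - Y²` converges to some `δ`,
so `Y' → -kδ`; a convergent function cannot have a derivative with a nonzero limit, so `δ = 0`,
`X → 0`, and `p` tends to `i · lim Y`.
-/

open Filter Set Topology

theorem eq_of_hasDerivAt_zero_on_Ici {E : Type*} [NormedAddCommGroup E] [NormedSpace ℝ E]
    {f : ℝ → E} {a : ℝ} (hf : ∀ s ≥ a, HasDerivAt f 0 s) : ∀ s ≥ a, f s = f a := fun s hs =>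
  constant_of_has_deriv_right_zero (fun x hx => (hf x hx.1).continuousAt.continuousWithinAt)
    (fun x hx => (hf x hx.1).hasDerivWithinAt) s ⟨hs, le_rfl⟩

theorem AntitoneOn.exists_tendsto_atTop_of_bddBelow {α β : Type*} [LinearOrder α]
    [ConditionallyCompleteLinearOrder β] [TopologicalSpace β] [OrderTopology β]
    {f : α → β} {a : α} (hf : AntitoneOn f (Ici a)) (hb : BddBelow (f '' Ici a)) :
    ∃ l, Tendsto f atTop (𝓝 l) := by
  have hanti : Antitone fun s => f (max s a) := fun s t hst =>
    hf (le_max_right s a) (le_max_right t a) (max_le_max_right a hst)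
  have hbdd : BddBelow (range fun s => f (max s a)) :=
    hb.mono (range_subset_iff.2 fun s => mem_image_of_mem f (le_max_right s a))
  refine ⟨_, (tendsto_atTop_ciInf hanti hbdd).congr' ?_⟩
  filter_upwards [eventually_ge_atTop a] with s hs
  rw [max_eq_left hs]

theorem eq_zero_of_tendsto_of_tendsto_deriv {f f' : ℝ → ℝ} {l L : ℝ}
    (hf : ∀ᶠ x in atTop, HasDerivAt f (f' x) x) (hl : Tendsto f atTop (𝓝 l))
    (hL : Tendsto f' atTop (𝓝 L)) : L = 0 := by
  obtain ⟨a, ha⟩ := eventually_atTop.1 hf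
  have hslope : ∀ x, ∃ ξ, a ≤ x → ξ ∈ Ioo x (x + 1) ∧ f' ξ = f (x + 1) - f x := by
    intro x
    by_cases hx : a ≤ x
    · obtain ⟨ξ, hξ, heq⟩ := exists_hasDerivAt_eq_slope f f' (lt_add_one x)
        (fun y hy => (ha y (hx.trans hy.1)).continuousAt.continuousWithinAt)
        (fun y hy => ha y (hx.trans hy.1.le))
      exact ⟨ξ, fun _ => ⟨hξ, by simpa using heq⟩⟩
    · exact ⟨x, fun h => absurd h hx⟩
  choose ξ hξ using hslope
  have hξ_top : Tendsto ξ atTop atTop :=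
    tendsto_atTop_mono' atTop (eventually_atTop.2 ⟨a, fun x hx => (hξ x hx).1.1.le⟩) tendsto_id
  have hdiff : Tendsto (fun x => f (x + 1) - f x) atTop (𝓝 0) := by
    simpa using (hl.comp (tendsto_atTop_add_const_right atTop 1 tendsto_id)).sub hl
  refine tendsto_nhds_unique (hL.comp hξ_top) (hdiff.congr' ?_)
  filter_upwards [eventually_ge_atTop a] with x hx
  exact ((hξ x hx).2).symm

section LimitProfileSystem

variable {X Y : ℝ → ℝ} {k s₀ : ℝ}

theorem sq_add_sq_eq_of_hasDerivAt_system
    (hX : ∀ s ≥ s₀, HasDerivAt X (k * X s * Y s) s)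
    (hY : ∀ s ≥ s₀, HasDerivAt Y (-(k * X s ^ 2)) s) :
    ∀ s ≥ s₀, X s ^ 2 + Y s ^ 2 = X s₀ ^ 2 + Y s₀ ^ 2 :=
  eq_of_hasDerivAt_zero_on_Ici fun s hs =>
    (((hX s hs).pow 2).add ((hY s hs).pow 2)).congr_deriv (by push_cast; ring)

theorem antitoneOn_const_mul_of_hasDerivAt_system
    (hY : ∀ s ≥ s₀, HasDerivAt Y (-(k * X s ^ 2)) s) :
    AntitoneOn (fun s => k * Y s) (Ici s₀) := by
  have hkY : ∀ s ≥ s₀, HasDerivAt (fun s => k * Y s) (k * -(k * X s ^ 2)) s :=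
    fun s hs => (hY s hs).const_mul k
  refine antitoneOn_of_hasDerivWithinAt_nonpos (f' := fun s => k * -(k * X s ^ 2))
    (convex_Ici s₀)
    (fun s hs => (hkY s hs).continuousAt.continuousWithinAt) (fun s hs => ?_) (fun s _ => ?_)
  · rw [interior_Ici] at hs
    exact (hkY s (le_of_lt hs)).hasDerivWithinAt
  · nlinarith [mul_nonneg (sq_nonneg k) (sq_nonneg (X s))]

theorem exists_tendsto_of_hasDerivAt_system (hk : k ≠ 0)
    (hX : ∀ s ≥ s₀, HasDerivAt X (k * X s * Y s) s)
    (hY : ∀ s ≥ s₀, HasDerivAt Y (-(k * X s ^ 2)) s) :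
    ∃ l, Tendsto Y atTop (𝓝 l) := by
  have hbdd : BddBelow ((fun s => k * Y s) '' Ici s₀) := by
    refine ⟨-(|k| * √(X s₀ ^ 2 + Y s₀ ^ 2)), ?_⟩
    rintro _ ⟨s, hs, rfl⟩
    have hYs : |Y s| ≤ √(X s₀ ^ 2 + Y s₀ ^ 2) := Real.abs_le_sqrt <| by
      nlinarith [sq_add_sq_eq_of_hasDerivAt_system hX hY s hs, sq_nonneg (X s)]
    calc -(|k| * √(X s₀ ^ 2 + Y s₀ ^ 2)) ≤ -(|k| * |Y s|) := by gcongr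
      _ ≤ k * Y s := by rw [← abs_mul]; exact neg_abs_le _
  obtain ⟨m, hm⟩ :=
    (antitoneOn_const_mul_of_hasDerivAt_system hY).exists_tendsto_atTop_of_bddBelow hbdd
  exact ⟨k⁻¹ * m, by simpa [← mul_assoc, inv_mul_cancel₀ hk] using hm.const_mul k⁻¹⟩

theorem tendsto_zero_of_hasDerivAt_system (hk : k ≠ 0)
    (hX : ∀ s ≥ s₀, HasDerivAt X (k * X s * Y s) s)
    (hY : ∀ s ≥ s₀, HasDerivAt Y (-(k * X s ^ 2)) s) :
    Tendsto X atTop (𝓝 0) := by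
  obtain ⟨l, hl⟩ := exists_tendsto_of_hasDerivAt_system hk hX hY
  set δ := X s₀ ^ 2 + Y s₀ ^ 2 - l ^ 2
  have hX2 : Tendsto (fun s => X s ^ 2) atTop (𝓝 δ) := by
    refine (tendsto_const_nhds.sub (hl.pow 2)).congr' ?_
    filter_upwards [eventually_ge_atTop s₀] with s hs
    linarith [sq_add_sq_eq_of_hasDerivAt_system hX hY s hs]
  have hδ : δ = 0 := by
    have := eq_zero_of_tendsto_of_tendsto_deriv (eventually_atTop.2 ⟨s₀, hY⟩) hl
      ((hX2.const_mul k).neg)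
    simpa [hk] using this
  rw [hδ] at hX2
  refine (tendsto_zero_iff_abs_tendsto_zero X).2 ?_
  simpa [Function.comp_def, Real.sqrt_sq_eq_abs] using (Real.continuous_sqrt.tendsto 0).comp hX2

end LimitProfileSystem

theorem HasDerivAt.complex_re {p : ℝ → ℂ} {p' : ℂ} {s : ℝ} (h : HasDerivAt p p' s) :
    HasDerivAt (fun t => (p t).re) p'.re s :=
  Complex.reCLM.hasFDerivAt.comp_hasDerivAt s h

theorem HasDerivAt.complex_im {p : ℝ → ℂ} {p' : ℂ} {s : ℝ} (h : HasDerivAt p p' s) :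
    HasDerivAt (fun t => (p t).im) p'.im s :=
  Complex.imCLM.hasFDerivAt.comp_hasDerivAt s h

/-- Every C¹ solution of i p' = (c/2)(Re p)p with c ∈ ℝ converges
as s → ∞, and if c ≠ 0 the limit is purely imaginary. -/
theorem stmt11 (c s₀ : ℝ) (p : ℝ → ℂ)
    (hp : ∀ s ≥ s₀, HasDerivAt p
      (-Complex.I * (((c : ℂ) / 2) * ((p s).re : ℂ) * p s)) s) :
    ∃ L : ℂ, Tendsto p atTop (nhds L) ∧ (c ≠ 0 → L.re = 0) := by
  by_cases hc : c = 0
  · subst hc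
    have hconst := eq_of_hasDerivAt_zero_on_Ici fun s hs => by simpa using hp s hs
    refine ⟨p s₀, tendsto_const_nhds.congr' ?_, fun h => absurd rfl h⟩
    filter_upwards [eventually_ge_atTop s₀] with s hs using (hconst s hs).symm
  have hX : ∀ s ≥ s₀, HasDerivAt (fun s => (p s).re) (c / 2 * (p s).re * (p s).im) s :=
    fun s hs => (hp s hs).complex_re.congr_deriv (by simp)
  have hY : ∀ s ≥ s₀, HasDerivAt (fun s => (p s).im) (-(c / 2 * (p s).re ^ 2)) s :=
    fun s hs => (hp s hs).complex_im.congr_deriv (by simp; ring)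
  have hk : c / 2 ≠ 0 := div_ne_zero hc two_ne_zero
  obtain ⟨l, hl⟩ := exists_tendsto_of_hasDerivAt_system hk hX hY
  have hre := tendsto_zero_of_hasDerivAt_system hk hX hY
  refine ⟨l * Complex.I, ?_, fun _ => by simp⟩
  have := (Complex.continuous_ofReal.tendsto 0 |>.comp hre).add
    ((Complex.continuous_ofReal.tendsto l |>.comp hl).mul_const Complex.I)
  simpa [Function.comp_def, Complex.re_add_im] using this
end

section
/- Let A(ω) be a symmetric positive-definite 2×2 matrix with eigenvalues 1 and c₀(ω) > 0, diagonalized as A(ω) = P(ω)ᵀ diag(1, c₀(ω)) P(ω) with P(ω) orthogonal. If F : ℝ² → ℝ² satisfies Yᵀ A(ω) F(Y) = 0 for all Y ∈ ℝ² and each component of F is a homogeneous quadratic polynomial in Y, then there exist constants c̃₁, c̃₂ (depending on ω) such that P(ω) F(P(ω)ᵀ Ỹ) = (c̃₁ Ỹ₁ + c̃₂ Ỹ₂) · (-c₀(ω) Ỹ₂, Ỹ₁)ᵀ for all Ỹ = (Ỹ₁, Ỹ₂) ∈ ℝ². -/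
/-!
Rotating by `P` turns `Yᵀ A F(Y) = 0` into `Ỹ₁ G₁(Ỹ) + c₀ Ỹ₂ G₂(Ỹ) = 0` for
`G(Ỹ) = P F(Pᵀ Ỹ)`, whose components are again binary quadratic forms. Comparing the
coefficients of the four cubic monomials in this identity (the `Ỹ₂³` one needs `c₀ ≠ 0`)
forces `G₁ = -c₀ Ỹ₂ ℓ` and `G₂ = Ỹ₁ ℓ`, where the coefficients of the linear form `ℓ` are
the `Ỹ₁²` and `Ỹ₁Ỹ₂` coefficients of `G₂`.
-/

open Matrix

def IsBinaryQuadraticForm (f : (Fin 2 → ℝ) → ℝ) : Prop :=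
  ∃ a b c : ℝ, ∀ Y : Fin 2 → ℝ, f Y = a * Y 0 ^ 2 + b * Y 0 * Y 1 + c * Y 1 ^ 2

namespace IsBinaryQuadraticForm

variable {f g : (Fin 2 → ℝ) → ℝ}

theorem add (hf : IsBinaryQuadraticForm f) (hg : IsBinaryQuadraticForm g) :
    IsBinaryQuadraticForm (fun Y => f Y + g Y) := by
  obtain ⟨a, b, c, hf⟩ := hf
  obtain ⟨a', b', c', hg⟩ := hg
  exact ⟨a + a', b + b', c + c', fun Y => by simp only [hf, hg]; ring⟩

theorem const_mul (r : ℝ) (hf : IsBinaryQuadraticForm f) :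
    IsBinaryQuadraticForm (fun Y => r * f Y) := by
  obtain ⟨a, b, c, hf⟩ := hf
  exact ⟨r * a, r * b, r * c, fun Y => by simp only [hf]; ring⟩

theorem comp_mulVec (hf : IsBinaryQuadraticForm f) (M : Matrix (Fin 2) (Fin 2) ℝ) :
    IsBinaryQuadraticForm (fun Y => f (M *ᵥ Y)) := by
  obtain ⟨a, b, c, hf⟩ := hf
  refine ⟨a * M 0 0 ^ 2 + b * M 0 0 * M 1 0 + c * M 1 0 ^ 2,
    2 * a * M 0 0 * M 0 1 + b * (M 0 0 * M 1 1 + M 0 1 * M 1 0) + 2 * c * M 1 0 * M 1 1,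
    a * M 0 1 ^ 2 + b * M 0 1 * M 1 1 + c * M 1 1 ^ 2, fun Y => ?_⟩
  simp only [hf, mulVec, dotProduct, Fin.sum_univ_two]
  ring

theorem mulVec_apply {G : (Fin 2 → ℝ) → (Fin 2 → ℝ)}
    (hG : ∀ j, IsBinaryQuadraticForm (fun Y => G Y j)) (M : Matrix (Fin 2) (Fin 2) ℝ) (i : Fin 2) :
    IsBinaryQuadraticForm (fun Y => (M *ᵥ G Y) i) := by
  simp only [mulVec, dotProduct, Fin.sum_univ_two]
  exact ((hG 0).const_mul (M i 0)).add ((hG 1).const_mul (M i 1))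

end IsBinaryQuadraticForm

theorem transpose_mulVec_dotProduct_conj_mulVec {R n : Type*} [CommRing R] [Fintype n]
    [DecidableEq n] (P D : Matrix n n R) (hP : P * Pᵀ = 1) (x v : n → R) :
    (Pᵀ *ᵥ x) ⬝ᵥ (Pᵀ * D * P) *ᵥ v = x ⬝ᵥ D *ᵥ (P *ᵥ v) := by
  rw [← mulVec_mulVec, ← mulVec_mulVec, dotProduct_mulVec, vecMul_transpose, mulVec_mulVec, hP,
    one_mulVec]

theorem exists_eq_smul_of_perp_of_isBinaryQuadraticForm {c : ℝ} (hc : c ≠ 0)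
    {G : (Fin 2 → ℝ) → (Fin 2 → ℝ)} (hG : ∀ i, IsBinaryQuadraticForm (fun Y => G Y i))
    (hperp : ∀ Y, Y 0 * G Y 0 + c * Y 1 * G Y 1 = 0) :
    ∃ c₁ c₂ : ℝ, ∀ Y, G Y = (c₁ * Y 0 + c₂ * Y 1) • ![-c * Y 1, Y 0] := by
  obtain ⟨a₀, b₀, d₀, hG₀⟩ := hG 0
  obtain ⟨a₁, b₁, d₁, hG₁⟩ := hG 1
  have hcubic : ∀ x y : ℝ,
      x * (a₀ * x ^ 2 + b₀ * x * y + d₀ * y ^ 2) + c * y * (a₁ * x ^ 2 + b₁ * x * y + d₁ * y ^ 2)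
        = 0 := fun x y => by
    simpa [hG₀, hG₁] using hperp ![x, y]
  have h₁₀ := hcubic 1 0
  have h₀₁ := hcubic 0 1
  have h₁₁ := hcubic 1 1
  have h₁m := hcubic 1 (-1)
  have ha₀ : a₀ = 0 := by linear_combination h₁₀
  have hd₁ : d₁ = 0 := (mul_eq_zero.mp (by linear_combination h₀₁)).resolve_left hc
  have hb₀ : b₀ = -c * a₁ := by linear_combination (h₁₁ - h₁m) / 2 - c * hd₁
  have hd₀ : d₀ = -c * b₁ := by linear_combination (h₁₁ + h₁m) / 2 - ha₀
  refine ⟨a₁, b₁, fun Y => ?_⟩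
  ext i
  fin_cases i
  · simp only [Fin.zero_eta, hG₀, ha₀, hb₀, hd₀, Pi.smul_apply, cons_val_zero, smul_eq_mul]
    ring
  · simp only [Fin.mk_one, hG₁, hd₁, Pi.smul_apply, cons_val_one, cons_val_fin_one, smul_eq_mul]
    ring

/-- If A = Pᵀ diag(1,c₀) P with P orthogonal and c₀ > 0, and
F : ℝ² → ℝ² has homogeneous quadratic components and satisfies Yᵀ A F(Y) = 0 for
all Y, then P F(Pᵀ Ỹ) = (c̃₁Ỹ₁ + c̃₂Ỹ₂)·(-c₀Ỹ₂, Ỹ₁)ᵀ for some constants c̃₁, c̃₂. -/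
theorem stmt19 (c₀ : ℝ) (hc₀ : 0 < c₀)
    (P : Matrix (Fin 2) (Fin 2) ℝ) (hP : Pᵀ * P = 1)
    (F : (Fin 2 → ℝ) → (Fin 2 → ℝ))
    (hquad : ∀ j : Fin 2, ∃ a b c : ℝ, ∀ Y : Fin 2 → ℝ,
      F Y j = a * Y 0 ^ 2 + b * Y 0 * Y 1 + c * Y 1 ^ 2)
    (hperp : ∀ Y : Fin 2 → ℝ,
      Y ⬝ᵥ (Pᵀ * Matrix.diagonal ![1, c₀] * P).mulVec (F Y) = 0) :
    ∃ c₁ c₂ : ℝ, ∀ Yt : Fin 2 → ℝ,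
      P.mulVec (F (Pᵀ.mulVec Yt)) = (c₁ * Yt 0 + c₂ * Yt 1) • ![-c₀ * Yt 1, Yt 0] := by
  have hPPt : P * Pᵀ = 1 := mul_eq_one_comm.mp hP
  have hG : ∀ i, IsBinaryQuadraticForm (fun Yt => (P *ᵥ F (Pᵀ *ᵥ Yt)) i) :=
    IsBinaryQuadraticForm.mulVec_apply (fun j => IsBinaryQuadraticForm.comp_mulVec (hquad j) Pᵀ) P
  refine exists_eq_smul_of_perp_of_isBinaryQuadraticForm hc₀.ne' hG fun Yt => ?_
  have h := hperp (Pᵀ *ᵥ Yt)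
  rw [transpose_mulVec_dotProduct_conj_mulVec P _ hPPt] at h
  simp only [dotProduct, Fin.sum_univ_two, mulVec_diagonal, cons_val_zero, cons_val_one,
    one_mul] at h
  linear_combination h
end
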